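/- arXiv:1907.01094 — 8 statements merged into one kernel-verified Lean document; each statement's English description precedes it below -/
import Mathlib

section
/- Let f: X → X be a Banach contraction with Lipschitz constant α < 1 and fixed point x*, on a complete metric space X. Let X̂ ⊆ X be an ε-net, r: X → X̂ an ε-projection (r(x)=x for x ∈ X̂ and d(x,r(x)) ≤ ε for all x), and f̂ = (r∘f)|_{X̂}. Then for every x ∈ X̂ and n ∈ ℕ, d(f̂ⁿ(x), x*) ≤ 5ε/(1−α) + αⁿ·d(x, x*). -/
theorem stmt1 {X : Type*} [MetricSpace X] [CompleteSpace X]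
    (f : X → X) (α ε : ℝ) (hα0 : 0 ≤ α) (hα1 : α < 1) (hε : 0 < ε)
    (hf : ∀ x y, dist (f x) (f y) ≤ α * dist x y)
    (xstar : X) (hfix : f xstar = xstar)
    (Xhat : Set X) (hnet : ∀ x : X, ∃ y ∈ Xhat, dist x y ≤ ε)
    (r : X → X) (hr_mem : ∀ x, r x ∈ Xhat) (hr_id : ∀ x ∈ Xhat, r x = x)
    (hr_dist : ∀ x, dist x (r x) ≤ ε) :
    ∀ x ∈ Xhat, ∀ n : ℕ,
      dist ((fun z => r (f z))^[n] x) xstar ≤ 5 * ε / (1 - α) + α ^ n * dist x xstar := by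
  intro x hx n
  have h1α : (0:ℝ) < 1 - α := by linarith
  induction n with
  | zero =>
    simp only [Function.iterate_zero, id, pow_zero, one_mul]
    have : 0 ≤ 5 * ε / (1 - α) := by positivity
    linarith
  | succ n ih =>
    rw [Function.iterate_succ_apply']
    set y := (fun z => r (f z))^[n] x with hy
    calc dist (r (f y)) xstar ≤ dist (r (f y)) (f y) + dist (f y) xstar :=
          dist_triangle _ _ _
      _ ≤ ε + α * dist y xstar := by
          have h1 := hr_dist (f y)
          have h2 : dist (f y) xstar ≤ α * dist y xstar := by
            have := hf y xstar; rwa [hfix] at this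
          rw [dist_comm] at h1
          linarith
      _ ≤ ε + α * (5 * ε / (1 - α) + α ^ n * dist x xstar) := by
          nlinarith [ih]
      _ ≤ 5 * ε / (1 - α) + α ^ (n+1) * dist x xstar := by
          have h5 : α * (5 * ε / (1 - α)) + ε ≤ 5 * ε / (1 - α) := by
            have key : 5 * ε / (1 - α) * (1 - α) = 5 * ε := div_mul_cancel₀ _ h1α.ne'
            nlinarith [key, hε]
          rw [pow_succ]
          nlinarith [h5]
end

section
/- Under the hypotheses of the discretized Banach fixed point theorem (f a Banach contraction with fixed point x*, X̂ an ε-net, r an ε-projection, f̂ = (r∘f)|_{X̂}), if moreover x* ∈ X̂, then x* is a fixed point of f̂ and for every x ∈ X̂ and n ∈ ℕ, d(f̂ⁿ(x), x*) ≤ 2ε/(1−α) + αⁿ·d(x, x*). -/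
theorem stmt2 {X : Type*} [MetricSpace X] [CompleteSpace X]
    (f : X → X) (α ε : ℝ) (hα0 : 0 ≤ α) (hα1 : α < 1) (hε : 0 < ε)
    (hf : ∀ x y, dist (f x) (f y) ≤ α * dist x y)
    (xstar : X) (hfix : f xstar = xstar)
    (Xhat : Set X) (hnet : ∀ x : X, ∃ y ∈ Xhat, dist x y ≤ ε)
    (hxstar : xstar ∈ Xhat)
    (r : X → X) (hr_mem : ∀ x, r x ∈ Xhat) (hr_id : ∀ x ∈ Xhat, r x = x)
    (hr_dist : ∀ x, dist x (r x) ≤ ε) :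
    r (f xstar) = xstar ∧
    ∀ x ∈ Xhat, ∀ n : ℕ,
      dist ((fun z => r (f z))^[n] x) xstar ≤ 2 * ε / (1 - α) + α ^ n * dist x xstar := by
  have h1α : 0 < 1 - α := by linarith
  refine ⟨by rw [hfix]; exact hr_id _ hxstar, fun x hx n => ?_⟩
  induction n with
  | zero =>
    simp only [Function.iterate_zero, id_eq, pow_zero, one_mul]
    have : 0 ≤ 2 * ε / (1 - α) := by positivity
    linarith
  | succ n ih =>
    rw [Function.iterate_succ_apply']
    set y := (fun z => r (f z))^[n] x with hy
    have key : ε + 2 * α * ε / (1 - α) ≤ 2 * ε / (1 - α) := by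
      rw [add_div' _ _ _ h1α.ne', div_le_div_iff₀ h1α h1α]
      nlinarith [mul_nonneg (by nlinarith : (0:ℝ) ≤ ε - α * ε) h1α.le]
    calc dist (r (f y)) xstar ≤ dist (r (f y)) (f y) + dist (f y) (f xstar) := by
          rw [hfix]; exact dist_triangle _ _ _
      _ ≤ ε + α * dist y xstar := by
          have h1 := hr_dist (f y)
          have h2 := hf y xstar
          rw [dist_comm] at h1; linarith
      _ ≤ ε + α * (2 * ε / (1 - α) + α ^ n * dist x xstar) := by
          nlinarith
      _ = ε + 2 * α * ε / (1 - α) + α ^ (n + 1) * dist x xstar := by ring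
      _ ≤ 2 * ε / (1 - α) + α ^ (n + 1) * dist x xstar := by linarith
end

section
/- Discrete Hutchinson–Barnsley theorem: let S = (X,(φⱼ)ⱼ₌₁^L) be an IFS of Banach contractions on a complete metric space X with attractor A_S and α := max Lip(φⱼ) < 1. Let X̂ be a proper ε-net, r an ε-projection, and Ŝ the discretized IFS with Hutchinson operator F_Ŝ. Then for every nonempty finite K ⊆ X̂ and n ∈ ℕ, h(F_Ŝⁿ(K), A_S) ≤ 5ε/(1−α) + αⁿ·h(K, A_S), where h is the Hausdorff metric. -/
theorem stmt8 {X : Type*} [MetricSpace X] [CompleteSpace X] {J : Type*} [Fintype J] [Nonempty J]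
    (φ : J → X → X) (α ε : ℝ) (hα0 : 0 ≤ α) (hα1 : α < 1) (hε : 0 < ε)
    (hφ : ∀ j, ∀ x y, dist (φ j x) (φ j y) ≤ α * dist x y)
    (A : Set X) (hAc : IsCompact A) (hAne : A.Nonempty) (hA : A = ⋃ j, φ j '' A)
    (Xhat : Set X) (hnet : ∀ x : X, ∃ y ∈ Xhat, dist x y ≤ ε)
    (hproper : ∀ D : Set X, Bornology.IsBounded D → (D ∩ Xhat).Finite)
    (r : X → X) (hr_mem : ∀ x, r x ∈ Xhat) (hr_id : ∀ x ∈ Xhat, r x = x)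
    (hr_dist : ∀ x, dist x (r x) ≤ ε) :
    ∀ K : Set X, K.Finite → K.Nonempty → K ⊆ Xhat → ∀ n : ℕ,
      Metric.hausdorffDist ((fun S => ⋃ j, (fun x => r (φ j x)) '' S)^[n] K) A ≤
        5 * ε / (1 - α) + α ^ n * Metric.hausdorffDist K A := by
  intro K hKf hKne hKX n
  set F : Set X → Set X := fun S => ⋃ j, (fun x => r (φ j x)) '' S with hF
  have hαlt : 0 < 1 - α := by linarith
  have hAb : Bornology.IsBounded A := hAc.isBounded
  -- invariants of the iteration
  have hiter : ∀ m, (F^[m] K).Finite ∧ (F^[m] K).Nonempty := by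
    intro m
    induction m with
    | zero => exact ⟨hKf, hKne⟩
    | succ m ih =>
      rw [Function.iterate_succ_apply']
      refine ⟨Set.finite_iUnion fun j => ih.1.image _, ?_⟩
      obtain ⟨x, hx⟩ := ih.2
      exact ⟨r (φ (Classical.arbitrary J) x),
        Set.mem_iUnion.2 ⟨_, Set.mem_image_of_mem _ hx⟩⟩
  -- one-step estimate
  have step : ∀ S : Set X, S.Finite → S.Nonempty →
      Metric.hausdorffDist (F S) A ≤ ε + α * Metric.hausdorffDist S A := by
    intro S hSf hSne
    have hne : EMetric.hausdorffEdist S A ≠ ⊤ :=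
      Metric.hausdorffEdist_ne_top_of_nonempty_of_bounded hSne hAne hSf.isBounded hAb
    have hd0 : 0 ≤ Metric.hausdorffDist S A := Metric.hausdorffDist_nonneg
    apply Metric.hausdorffDist_le_of_mem_dist
      (by nlinarith)
    · intro x hx
      obtain ⟨j, k, hk, rfl⟩ : ∃ j, ∃ k ∈ S, r (φ j k) = x := by
        simpa [F, Set.mem_iUnion, eq_comm] using hx
      obtain ⟨a, ha, hda⟩ := hAc.exists_infDist_eq_dist hAne k
      have hmemA : φ j a ∈ A := by
        have : φ j a ∈ ⋃ j, φ j '' A := Set.mem_iUnion.2 ⟨j, Set.mem_image_of_mem _ ha⟩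
        rwa [← hA] at this
      refine ⟨φ j a, hmemA, ?_⟩
      have h1 : dist (r (φ j k)) (φ j k) ≤ ε := by
        rw [dist_comm]; exact hr_dist _
      have h2 : dist (φ j k) (φ j a) ≤ α * dist k a := hφ j k a
      have h3 : dist k a ≤ Metric.hausdorffDist S A := by
        rw [← hda]; exact Metric.infDist_le_hausdorffDist_of_mem hk hne
      calc dist (r (φ j k)) (φ j a)
          ≤ dist (r (φ j k)) (φ j k) + dist (φ j k) (φ j a) := dist_triangle _ _ _
        _ ≤ ε + α * dist k a := by linarith
        _ ≤ ε + α * Metric.hausdorffDist S A := by nlinarith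
    · intro a ha
      obtain ⟨j, a', ha', rfl⟩ : ∃ j, ∃ a' ∈ A, φ j a' = a := by
        have : a ∈ ⋃ j, φ j '' A := by rwa [← hA]
        simpa [Set.mem_iUnion] using this
      obtain ⟨k, hk, hdk⟩ := hSf.isCompact.exists_infDist_eq_dist hSne a'
      refine ⟨r (φ j k), Set.mem_iUnion.2 ⟨j, Set.mem_image_of_mem _ hk⟩, ?_⟩
      have h1 : dist (φ j k) (r (φ j k)) ≤ ε := hr_dist _
      have h2 : dist (φ j a') (φ j k) ≤ α * dist a' k := hφ j a' k
      have h3 : dist a' k ≤ Metric.hausdorffDist S A := by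
        rw [← hdk, Metric.hausdorffDist_comm]
        exact Metric.infDist_le_hausdorffDist_of_mem ha'
          (by rwa [EMetric.hausdorffEdist_comm])
      calc dist (φ j a') (r (φ j k))
          ≤ dist (φ j a') (φ j k) + dist (φ j k) (r (φ j k)) := dist_triangle _ _ _
        _ ≤ α * dist a' k + ε := by linarith
        _ ≤ ε + α * Metric.hausdorffDist S A := by nlinarith
  -- main induction with the sharper constant ε/(1-α)
  have hdd : ε / (1 - α) * (1 - α) = ε := div_mul_cancel₀ ε (ne_of_gt hαlt)
  have main : ∀ m, Metric.hausdorffDist (F^[m] K) A ≤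
      ε / (1 - α) + α ^ m * Metric.hausdorffDist K A := by
    intro m
    induction m with
    | zero =>
      simp only [Function.iterate_zero, id_eq, pow_zero, one_mul]
      have : 0 ≤ ε / (1 - α) := le_of_lt (div_pos hε hαlt)
      linarith
    | succ m ih =>
      rw [Function.iterate_succ_apply']
      have h0 : 0 ≤ Metric.hausdorffDist K A := Metric.hausdorffDist_nonneg
      calc Metric.hausdorffDist (F (F^[m] K)) A
          ≤ ε + α * Metric.hausdorffDist (F^[m] K) A := step _ (hiter m).1 (hiter m).2
        _ ≤ ε + α * (ε / (1 - α) + α ^ m * Metric.hausdorffDist K A) := by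
            nlinarith [ih]
        _ = ε + α * (ε / (1 - α)) + α ^ (m + 1) * Metric.hausdorffDist K A := by ring
        _ ≤ ε / (1 - α) + α ^ (m + 1) * Metric.hausdorffDist K A := by nlinarith [hdd]
  have h5 : ε / (1 - α) ≤ 5 * ε / (1 - α) := by
    gcongr
    linarith
  linarith [main n]
end

section
/- Let r: X → X̂ be an ε-projection onto a proper ε-net X̂, and for u ∈ F*_X define r(u)(x) := sup{u(y) : y ∈ r⁻¹(x)}. Then r(u) is a normal fuzzy set with finite support contained in X̂ (hence r(u) ∈ F̃*_{X̂}), and d_∞(u, r(u)) ≤ ε. In particular F̃*_{X̂} is an ε-net of (F*_X, d_∞) and r is an ε-projection. -/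
/-!
Every point `y` lies in the fibre over `r y`, at distance at most `ε`, so each `α`-cut of `u` lies
within `ε` of the `α`-cut of `r(u)`. Conversely, if `α ≤ r(u)(x)` with `α > 0`, the points
of the fibre over `x` on which `u` nearly reaches `α` lie in the compact set
`closedBall x ε ∩ closure (supp u)`, where the upper semicontinuous `u` attains its maximum; that
maximiser is a point of the `α`-cut of `u` within `ε` of `x`. Finiteness of the support of `r(u)`
holds because it lies in the `ε`-neighbourhood of the bounded support of `u` and in the proper net.
-/

open Metric

/-- The paper's `r(u)`, the image of `u` under `r` by Zadeh's extension principle. -/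
noncomputable def zadehImage {X Y : Type*} (r : X → Y) (u : X → ℝ) (x : Y) : ℝ :=
  sSup (u '' {y | r y = x})

section ZadehImage

variable {X Y : Type*} {r : X → Y} {u : X → ℝ}

lemma le_zadehImage (hb : BddAbove (Set.range u)) (y : X) : u y ≤ zadehImage r u (r y) :=
  le_csSup (hb.mono (Set.image_subset_range _ _)) ⟨y, rfl, rfl⟩

lemma zadehImage_le {c : ℝ} (hc : 0 ≤ c) (hu : ∀ y, u y ≤ c) (x : Y) :
    zadehImage r u x ≤ c :=
  Real.sSup_le (by rintro _ ⟨y, -, rfl⟩; exact hu y) hc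

lemma zadehImage_apply_eq_one (hu : ∀ y, u y ≤ 1) {y : X} (hy : u y = 1) :
    zadehImage r u (r y) = 1 :=
  (zadehImage_le zero_le_one hu _).antisymm
    (hy ▸ le_zadehImage ⟨1, Set.forall_mem_range.2 hu⟩ y)

/-- Since `sSup ∅ = 0` in `ℝ`, the bound `0 ≤ β` is what forces the fibre to be nonempty. -/
lemma exists_lt_of_lt_zadehImage {β : ℝ} (hβ : 0 ≤ β) {x : Y} (h : β < zadehImage r u x) :
    ∃ y, r y = x ∧ β < u y := by
  have hne : (u '' {y | r y = x}).Nonempty := by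
    by_contra hempty
    rw [Set.not_nonempty_iff_eq_empty] at hempty
    simp only [zadehImage, hempty, Real.sSup_empty] at h
    linarith
  obtain ⟨_, ⟨y, hy, rfl⟩, hβy⟩ := exists_lt_of_lt_csSup hne h
  exact ⟨y, hy, hβy⟩

lemma setOf_pos_zadehImage_subset_range : {x | 0 < zadehImage r u x} ⊆ Set.range r := fun _ hx =>
  let ⟨y, hy, _⟩ := exists_lt_of_lt_zadehImage le_rfl hx
  ⟨y, hy⟩

end ZadehImage

section Projection

variable {X : Type*} [MetricSpace X] {r : X → X} {u : X → ℝ} {ε : ℝ}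

lemma setOf_pos_zadehImage_subset_cthickening (hr : ∀ x, dist x (r x) ≤ ε) :
    {x | 0 < zadehImage r u x} ⊆ cthickening ε {x | 0 < u x} := by
  intro x hx
  obtain ⟨y, rfl, hy⟩ := exists_lt_of_lt_zadehImage le_rfl hx
  exact mem_cthickening_of_dist_le _ y ε _ hy (dist_comm y (r y) ▸ hr y)

lemma exists_le_apply_dist_le_of_le_zadehImage (huc : UpperSemicontinuous u)
    (hus : IsCompact (closure {x | 0 < u x})) (hr : ∀ x, dist x (r x) ≤ ε) {α : ℝ}
    (hα : 0 < α) {x : X} (hx : α ≤ zadehImage r u x) : ∃ y, α ≤ u y ∧ dist x y ≤ ε := by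
  set K := closedBall x ε ∩ closure {z | 0 < u z}
  have hK : IsCompact K := hus.inter_left isClosed_closedBall
  have approx : ∀ β, 0 ≤ β → β < α → ∃ y ∈ K, β < u y := by
    intro β hβ hβα
    obtain ⟨y, rfl, hy⟩ := exists_lt_of_lt_zadehImage hβ (hβα.trans_le hx)
    exact ⟨y, ⟨mem_closedBall.2 (hr y), subset_closure (hβ.trans_lt hy)⟩, hy⟩
  obtain ⟨y, hyK, hmax⟩ := (huc.upperSemicontinuousOn K).exists_isMaxOn
    (let ⟨y, hy, _⟩ := approx 0 le_rfl hα; ⟨y, hy⟩) hK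
  refine ⟨y, ?_, mem_closedBall'.1 hyK.1⟩
  by_contra! hlt
  obtain ⟨z, hzK, hz⟩ := approx (max 0 (u y)) (le_max_left _ _) (max_lt hα hlt)
  have : u z ≤ u y := hmax hzK
  linarith [le_max_right 0 (u y)]

lemma hausdorffDist_setOf_le_zadehImage_le (hb : BddAbove (Set.range u))
    (huc : UpperSemicontinuous u) (hus : IsCompact (closure {x | 0 < u x})) (hε : 0 ≤ ε)
    (hr : ∀ x, dist x (r x) ≤ ε) {α : ℝ} (hα : 0 < α) :
    hausdorffDist {x | α ≤ u x} {x | α ≤ zadehImage r u x} ≤ ε :=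
  hausdorffDist_le_of_mem_dist hε
    (fun y hy => ⟨r y, (Set.mem_ofPred.1 hy).trans (le_zadehImage hb y), hr y⟩)
    (fun _ hx => exists_le_apply_dist_le_of_le_zadehImage huc hus hr hα hx)

end Projection

theorem stmt14_general {X : Type*} [MetricSpace X] (ε : ℝ) (hε : 0 < ε) (Xhat : Set X)
    (hproper : ∀ D : Set X, Bornology.IsBounded D → (D ∩ Xhat).Finite)
    (r : X → X) (hr_mem : ∀ x, r x ∈ Xhat)
    (hr_dist : ∀ x, dist x (r x) ≤ ε)
    (u : X → ℝ)
    (hu01 : ∀ x, u x ∈ Set.Icc (0 : ℝ) 1) (hun : ∃ x, u x = 1)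
    (huc : UpperSemicontinuous u) (hus : IsCompact (closure {x | 0 < u x}))
    (ru : X → ℝ) (hru : ∀ x, ru x = sSup (u '' {y | r y = x})) :
    (∃ x, ru x = 1) ∧ {x | 0 < ru x}.Finite ∧ {x | 0 < ru x} ⊆ Xhat ∧
    (⨆ α ∈ Set.Ioc (0 : ℝ) 1,
        Metric.hausdorffDist {x | α ≤ u x} {x | α ≤ ru x}) ≤ ε := by
  obtain rfl : ru = zadehImage r u := funext hru
  have hle : ∀ x, u x ≤ 1 := fun x => (hu01 x).2
  obtain ⟨x₀, hx₀⟩ := hun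
  have hsupp : {x | 0 < zadehImage r u x} ⊆ Xhat :=
    setOf_pos_zadehImage_subset_range.trans (Set.range_subset_iff.2 hr_mem)
  have hbdd : Bornology.IsBounded (cthickening ε {x | 0 < u x}) :=
    (hus.isBounded.subset subset_closure).cthickening
  have hfin : {x | 0 < zadehImage r u x}.Finite := (hproper _ hbdd).subset fun _ hx =>
    ⟨setOf_pos_zadehImage_subset_cthickening hr_dist hx, hsupp hx⟩
  have hcut : ∀ α ∈ Set.Ioc (0 : ℝ) 1,
      hausdorffDist {x | α ≤ u x} {x | α ≤ zadehImage r u x} ≤ ε := fun _ hα =>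
    hausdorffDist_setOf_le_zadehImage_le ⟨1, Set.forall_mem_range.2 hle⟩ huc hus hε.le hr_dist hα.1
  exact ⟨⟨r x₀, zadehImage_apply_eq_one hle hx₀⟩, hfin, hsupp,
    Real.iSup_le (fun α => Real.iSup_le (hcut α) hε.le) hε.le⟩

theorem stmt14 {X : Type*} [MetricSpace X] (ε : ℝ) (hε : 0 < ε) (Xhat : Set X)
    (hnet : ∀ x : X, ∃ y ∈ Xhat, dist x y ≤ ε)
    (hproper : ∀ D : Set X, Bornology.IsBounded D → (D ∩ Xhat).Finite)
    (r : X → X) (hr_mem : ∀ x, r x ∈ Xhat) (hr_id : ∀ x ∈ Xhat, r x = x)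
    (hr_dist : ∀ x, dist x (r x) ≤ ε)
    (u : X → ℝ)
    (hu01 : ∀ x, u x ∈ Set.Icc (0 : ℝ) 1) (hun : ∃ x, u x = 1)
    (huc : UpperSemicontinuous u) (hus : IsCompact (closure {x | 0 < u x}))
    (ru : X → ℝ) (hru : ∀ x, ru x = sSup (u '' {y | r y = x})) :
    (∃ x, ru x = 1) ∧ {x | 0 < ru x}.Finite ∧ {x | 0 < ru x} ⊆ Xhat ∧
    (⨆ α ∈ Set.Ioc (0 : ℝ) 1,
        Metric.hausdorffDist {x | α ≤ u x} {x | α ≤ ru x}) ≤ ε :=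
  stmt14_general ε hε Xhat hproper r hr_mem hr_dist u hu01 hun huc hus ru hru
end

section
/- For α ∈ (0,1] and u ∈ F*_X, the α-cut of the Zadeh pushforward r(u) satisfies: x ∈ [r(u)]^α implies there exists y ∈ cl(r⁻¹(x)) with u(y) ≥ α; consequently h([u]^α, [r(u)]^α) ≤ ε whenever r is an ε-projection. -/
theorem stmt15 {X : Type*} [MetricSpace X] (ε : ℝ) (hε : 0 < ε) (Xhat : Set X)
    (hnet : ∀ x : X, ∃ y ∈ Xhat, dist x y ≤ ε)
    (hproper : ∀ D : Set X, Bornology.IsBounded D → (D ∩ Xhat).Finite)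
    (r : X → X) (hr_mem : ∀ x, r x ∈ Xhat) (hr_id : ∀ x ∈ Xhat, r x = x)
    (hr_dist : ∀ x, dist x (r x) ≤ ε)
    (u : X → ℝ)
    (hu01 : ∀ x, u x ∈ Set.Icc (0 : ℝ) 1) (hun : ∃ x, u x = 1)
    (huc : UpperSemicontinuous u) (hus : IsCompact (closure {x | 0 < u x}))
    (ru : X → ℝ) (hru : ∀ x, ru x = sSup (u '' {y | r y = x})) :
    ∀ α ∈ Set.Ioc (0 : ℝ) 1,
      (∀ x, α ≤ ru x → ∃ y ∈ closure {z | r z = x}, α ≤ u y) ∧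
      Metric.hausdorffDist {x | α ≤ u x} {x | α ≤ ru x} ≤ ε := by
  have key : ∀ α ∈ Set.Ioc (0 : ℝ) 1, ∀ x, α ≤ ru x →
      ∃ y ∈ closure {z | r z = x}, α ≤ u y := by
    rintro α ⟨hα0, hα1⟩ x hx
    rw [hru x] at hx
    set F := {z | r z = x} with hF
    have hbdd : BddAbove (u '' F) := ⟨1, by rintro _ ⟨z, _, rfl⟩; exact (hu01 z).2⟩
    have hFne : (u '' F).Nonempty := by
      by_contra h
      rw [Set.not_nonempty_iff_eq_empty] at h
      rw [h, Real.sSup_empty] at hx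
      linarith
    set s := sSup (u '' F) with hs_def
    have hseq : ∀ n : ℕ, ∃ z ∈ F, s - α / (2 * (n + 1)) < u z := by
      intro n
      have hlt : s - α / (2 * ((n : ℝ) + 1)) < s := by
        have h1 : 0 < α / (2 * ((n : ℝ) + 1)) := by positivity
        linarith
      obtain ⟨_, ⟨z, hz, rfl⟩, h⟩ := exists_lt_of_lt_csSup hFne hlt
      exact ⟨z, hz, h⟩
    choose z hzF hzu using hseq
    have hsmall : ∀ n : ℕ, α / (2 * ((n : ℝ) + 1)) ≤ α / 2 := by
      intro n
      apply div_le_div_of_nonneg_left hα0.le (by norm_num)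
      have : (0 : ℝ) ≤ (n : ℝ) := Nat.cast_nonneg n
      linarith
    have hzα : ∀ n : ℕ, α - α / (2 * ((n : ℝ) + 1)) < u (z n) := by
      intro n
      have := hzu n
      linarith
    have hz0 : ∀ n, 0 < u (z n) := by
      intro n
      have h1 := hzα n
      have h2 := hsmall n
      linarith
    obtain ⟨y, hyK, φ, hφ, hlim⟩ :=
      hus.tendsto_subseq (fun n => subset_closure (hz0 n))
    have hyF : y ∈ closure F :=
      mem_closure_of_tendsto hlim (Filter.Eventually.of_forall fun n => hzF (φ n))
    refine ⟨y, hyF, ?_⟩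
    by_contra hlt
    push_neg at hlt
    set c := (u y + α) / 2 with hc
    have h1 : ∀ᶠ w in nhds y, u w < c := huc y c (by rw [hc]; linarith)
    have h2 : ∀ᶠ n in Filter.atTop, u (z (φ n)) < c := hlim.eventually h1
    have hten : Filter.Tendsto (fun n : ℕ => α - α / (2 * ((n : ℝ) + 1)))
        Filter.atTop (nhds α) := by
      have h0 : Filter.Tendsto (fun n : ℕ => (1 : ℝ) / ((n : ℝ) + 1))
          Filter.atTop (nhds 0) := tendsto_one_div_add_atTop_nhds_zero_nat
      have h3 := h0.const_mul (α / 2)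
      rw [mul_zero] at h3
      have heq : (fun n : ℕ => α - α / (2 * ((n : ℝ) + 1))) =
          (fun n : ℕ => α - α / 2 * ((1 : ℝ) / ((n : ℝ) + 1))) := by
        funext n
        have : ((n : ℝ) + 1) ≠ 0 := by positivity
        field_simp
        try ring
      rw [heq]
      simpa using (tendsto_const_nhds.sub h3)
    have h4 : ∀ᶠ n : ℕ in Filter.atTop, c < α - α / (2 * ((n : ℝ) + 1)) :=
      hten.eventually (eventually_gt_nhds (by rw [hc]; linarith))
    have h5 : ∀ᶠ n : ℕ in Filter.atTop, c < α - α / (2 * ((φ n : ℝ) + 1)) := by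
      filter_upwards [(hφ.tendsto_atTop).eventually h4] with n hn
      exact hn
    obtain ⟨n, hn2, hn5⟩ := (h2.and h5).exists
    exact absurd (hn5.trans (hzα (φ n))) (not_lt.mpr hn2.le)
  intro α hα
  refine ⟨key α hα, ?_⟩
  apply Metric.hausdorffDist_le_of_mem_dist hε.le
  · intro a ha
    refine ⟨r a, ?_, hr_dist a⟩
    simp only [Set.mem_setOf_eq] at ha ⊢
    rw [hru]
    refine le_trans ha (le_csSup ⟨1, ?_⟩ ⟨a, rfl, rfl⟩)
    rintro _ ⟨w, _, rfl⟩
    exact (hu01 w).2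
  · intro b hb
    obtain ⟨y, hy, hyu⟩ := key α hα b hb
    refine ⟨y, hyu, ?_⟩
    have hsub : closure {z | r z = b} ⊆ Metric.closedBall b ε := by
      apply closure_minimal _ Metric.isClosed_closedBall
      intro w hw
      simp only [Set.mem_setOf_eq] at hw
      rw [Metric.mem_closedBall, ← hw]
      exact hr_dist w
    have := hsub hy
    rw [Metric.mem_closedBall] at this
    rwa [dist_comm]
end

section
/- Let S = (X,(φⱼ)ⱼ₌₁^L,(ρⱼ)ⱼ₌₁^L) be an IFZS with Banach contractions φⱼ and admissible grey level maps ρⱼ, X̂ a proper ε-net, r an ε-projection. Then the discretization commutes: for any u ∈ F̃*_{X̂}, e(Z_Ŝ(u|_{X̂})) = r(Z_S(u)), where Ŝ = (X̂,(r∘φⱼ)|_{X̂},(ρⱼ)) and Z denotes the fuzzy Hutchinson operator Z_S(u) = max_j ρⱼ(φⱼ(u)). -/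
/-!
Both `Z_S` and the pushforward along `r` are built from Zadeh extensions `f(u)(b) = sup u(f⁻¹ b)`,
and a sup of sups gives functoriality, `r(φⱼ(u)) = (r ∘ φⱼ)(u)`. For a finitely supported `u ≥ 0`
every such sup is a maximum (or `sSup ∅ = 0` over an empty fibre), so a nondecreasing `ρⱼ` with
`ρⱼ(0) = 0` commutes with the sup over a fibre of `r`, and so does the finite max over `j`.
Since `u` is supported in `X̂`, restricting the fibres of `r ∘ φⱼ` to `X̂` changes nothing.
-/

open Set Function

section SupOfImage

variable {α J : Type*}

theorem Set.finite_image_of_support_finite {u : α → ℝ} (hu : (support u).Finite) (S : Set α) :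
    (u '' S).Finite := by
  refine ((hu.image u).insert 0).subset ?_
  rintro _ ⟨a, -, rfl⟩
  by_cases ha : u a = 0
  · exact Or.inl ha
  · exact Or.inr ⟨a, ha, rfl⟩

theorem Real.sSup_image_le_iff {u : α → ℝ} (hu0 : 0 ≤ u) {S : Set α} (hS : BddAbove (u '' S))
    {c : ℝ} : sSup (u '' S) ≤ c ↔ 0 ≤ c ∧ ∀ a ∈ S, u a ≤ c := by
  refine ⟨fun h => ⟨(Real.sSup_nonneg ?_).trans h, fun a ha => (le_csSup hS ⟨a, ha, rfl⟩).trans h⟩,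
    fun ⟨hc, h⟩ => Real.sSup_le ?_ hc⟩
  · rintro _ ⟨a, -, rfl⟩
    exact hu0 a
  · rintro _ ⟨a, ha, rfl⟩
    exact h a ha

theorem Real.sSup_image_inter_of_support_subset {u : α → ℝ} (hu0 : 0 ≤ u)
    (hu : (support u).Finite) {A : Set α} (hA : support u ⊆ A) (S : Set α) :
    sSup (u '' (A ∩ S)) = sSup (u '' S) := by
  refine eq_of_forall_ge_iff fun c => ?_
  rw [Real.sSup_image_le_iff hu0 ((finite_image_of_support_finite hu _).bddAbove),
    Real.sSup_image_le_iff hu0 ((finite_image_of_support_finite hu _).bddAbove)]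
  refine and_congr_right fun hc => ⟨fun h a ha => ?_, fun h a ha => h a ha.2⟩
  by_cases hua : u a = 0
  · exact hua ▸ hc
  · exact h a ⟨hA hua, ha⟩

theorem Real.sSup_image_comp_of_monotoneOn {ρ : ℝ → ℝ} {T : Set ℝ} (hρ : MonotoneOn ρ T)
    (hρ0 : ρ 0 = 0) {v : α → ℝ} (hvT : ∀ a, v a ∈ T) (hv : (support v).Finite) (S : Set α) :
    sSup ((fun a => ρ (v a)) '' S) = ρ (sSup (v '' S)) := by
  rcases S.eq_empty_or_nonempty with rfl | hS
  · simp [hρ0]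
  have hfin := finite_image_of_support_finite hv S
  obtain ⟨a₀, ha₀, hmax⟩ := (hS.image v).csSup_mem hfin
  rw [← hmax]
  refine IsGreatest.csSup_eq ⟨⟨a₀, ha₀, rfl⟩, ?_⟩
  rintro _ ⟨a, ha, rfl⟩
  exact hρ (hvT a) (hvT a₀) (hmax ▸ le_csSup hfin.bddAbove ⟨a, ha, rfl⟩)

theorem csSup_image_iSup {β : Type*} [ConditionallyCompleteLattice β] [Finite J] [Nonempty J]
    {w : J → α → β} {S : Set α} (hw : ∀ j, BddAbove (w j '' S)) :
    sSup ((fun a => ⨆ j, w j a) '' S) = ⨆ j, sSup (w j '' S) := by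
  rcases S.eq_empty_or_nonempty with rfl | hS
  · simp
  have hle : ∀ a ∈ S, ⨆ j, w j a ≤ ⨆ j, sSup (w j '' S) := fun a ha =>
    ciSup_mono (finite_range _).bddAbove fun j => le_csSup (hw j) ⟨a, ha, rfl⟩
  have hbdd : BddAbove ((fun a => ⨆ j, w j a) '' S) := by
    refine ⟨⨆ j, sSup (w j '' S), ?_⟩
    rintro _ ⟨a, ha, rfl⟩
    exact hle a ha
  refine le_antisymm ?_ (ciSup_le fun j => csSup_le (hS.image _) ?_)
  · refine csSup_le (hS.image _) ?_
    rintro _ ⟨a, ha, rfl⟩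
    exact hle a ha
  · rintro _ ⟨a, ha, rfl⟩
    exact (le_ciSup (finite_range _).bddAbove j).trans (le_csSup hbdd ⟨a, ha, rfl⟩)

end SupOfImage

section ZadehExtension

variable {α β γ : Type*}

noncomputable def zadehExt (f : α → β) (u : α → ℝ) (b : β) : ℝ :=
  sSup (u '' {a | f a = b})

theorem zadehExt_nonneg (f : α → β) (u : α → ℝ) (hu0 : 0 ≤ u) : 0 ≤ zadehExt f u := by
  intro b
  refine Real.sSup_nonneg ?_
  rintro _ ⟨a, -, rfl⟩
  exact hu0 a

theorem zadehExt_mem_Icc (f : α → β) {u : α → ℝ} (hu : ∀ a, u a ∈ Icc (0 : ℝ) 1) (b : β) :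
    zadehExt f u b ∈ Icc (0 : ℝ) 1 := by
  refine ⟨zadehExt_nonneg f u (fun a => (hu a).1) b, Real.sSup_le ?_ zero_le_one⟩
  rintro _ ⟨a, -, rfl⟩
  exact (hu a).2

theorem support_zadehExt_subset (f : α → β) {u : α → ℝ} (hu : (support u).Finite) :
    support (zadehExt f u) ⊆ f '' support u := by
  intro b hb
  rcases eq_empty_or_nonempty {a | f a = b} with hempty | hne
  · simp [zadehExt, hempty] at hb
  obtain ⟨a, ha, hmax⟩ :=
    (hne.image u).csSup_mem (finite_image_of_support_finite hu _)
  exact ⟨a, by rwa [mem_support, hmax], ha⟩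

theorem support_zadehExt_finite (f : α → β) {u : α → ℝ} (hu : (support u).Finite) :
    (support (zadehExt f u)).Finite :=
  (hu.image f).subset (support_zadehExt_subset f hu)

theorem zadehExt_zadehExt (g : β → γ) (f : α → β) {u : α → ℝ} (hu0 : 0 ≤ u)
    (hu : (support u).Finite) : zadehExt g (zadehExt f u) = zadehExt (g ∘ f) u := by
  funext c
  have hfin := finite_image_of_support_finite hu
  have hfin' := finite_image_of_support_finite (support_zadehExt_finite f hu)
  refine eq_of_forall_ge_iff fun d => ?_
  simp only [zadehExt]
  rw [Real.sSup_image_le_iff (zadehExt_nonneg f u hu0) (hfin' _).bddAbove,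
    Real.sSup_image_le_iff hu0 (hfin _).bddAbove]
  refine and_congr_right fun hd => ⟨fun h a ha => ?_, fun h b hb => ?_⟩
  · exact (le_csSup (hfin {a' | f a' = f a}).bddAbove ⟨a, rfl, rfl⟩).trans (h (f a) ha)
  · refine (Real.sSup_image_le_iff hu0 (hfin _).bddAbove).2 ⟨hd, fun a ha => h a ?_⟩
    exact (congrArg g ha).trans hb

end ZadehExtension

open scoped Classical in
theorem stmt16_general {X : Type*} {J : Type*} [Fintype J] [Nonempty J]
    (φ : J → X → X)
    (ρ : J → ℝ → ℝ)
    (hρ_mono : ∀ j, MonotoneOn (ρ j) (Set.Icc (0 : ℝ) 1))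
    (hρ0 : ∀ j, ρ j 0 = 0)
    (Xhat : Set X)
    (r : X → X) (hr_mem : ∀ x, r x ∈ Xhat)
    (u : X → ℝ)
    (hu01 : ∀ x, u x ∈ Set.Icc (0 : ℝ) 1)
    (hufin : {x | 0 < u x}.Finite) (husub : {x | 0 < u x} ⊆ Xhat)
    (ZS : (X → ℝ) → X → ℝ)
    (hZS : ∀ v : X → ℝ, ∀ x, ZS v x = ⨆ j, ρ j (sSup (v '' {y | φ j y = x})))
    (Zhat : X → ℝ)
    (hZhat : ∀ x, Zhat x =
      if x ∈ Xhat then ⨆ j, ρ j (sSup (u '' {y | y ∈ Xhat ∧ r (φ j y) = x})) else 0) :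
    Zhat = fun x => sSup (ZS u '' {y | r y = x}) := by
  have hu0 : 0 ≤ u := fun x => (hu01 x).1
  have hsupp : support u = {x | 0 < u x} :=
    ext fun x => ⟨fun hx => (hu0 x).lt_of_ne' hx, fun hx => hx.ne'⟩
  have hu : (support u).Finite := hsupp ▸ hufin
  have hZS_eq : ZS u = fun y => ⨆ j, ρ j (zadehExt (φ j) u y) := funext (hZS u)
  funext x
  rw [hZhat]
  split_ifs with hx
  · have hbdd : ∀ j, BddAbove ((fun y => ρ j (zadehExt (φ j) u y)) '' {y | r y = x}) := by
      intro j
      rw [← image_image]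
      exact ((finite_image_of_support_finite (support_zadehExt_finite _ hu) _).image _).bddAbove
    rw [hZS_eq, csSup_image_iSup hbdd]
    refine iSup_congr fun j => ?_
    rw [Real.sSup_image_comp_of_monotoneOn (hρ_mono j) (hρ0 j) (zadehExt_mem_Icc _ hu01)
      (support_zadehExt_finite _ hu)]
    change _ = ρ j (zadehExt r (zadehExt (φ j) u) x)
    rw [zadehExt_zadehExt r (φ j) hu0 hu]
    exact congrArg (ρ j) (Real.sSup_image_inter_of_support_subset hu0 hu (hsupp ▸ husub) _)
  · have hfibre : {y | r y = x} = ∅ :=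
      eq_empty_of_forall_notMem fun y hy => hx (hy ▸ hr_mem y)
    rw [hfibre, image_empty, Real.sSup_empty]

open scoped Classical in
theorem stmt16 {X : Type*} [MetricSpace X] {J : Type*} [Fintype J] [Nonempty J]
    (φ : J → X → X) (α : ℝ) (hα0 : 0 ≤ α) (hα1 : α < 1)
    (hφ : ∀ j, ∀ x y, dist (φ j x) (φ j y) ≤ α * dist x y)
    (ρ : J → ℝ → ℝ)
    (hρ_mono : ∀ j, MonotoneOn (ρ j) (Set.Icc (0 : ℝ) 1))
    (hρ_maps : ∀ j, ∀ t ∈ Set.Icc (0 : ℝ) 1, ρ j t ∈ Set.Icc (0 : ℝ) 1)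
    (hρ_rc : ∀ j, ∀ a ∈ Set.Icc (0 : ℝ) 1, ContinuousWithinAt (ρ j) (Set.Ici a) a)
    (hρ0 : ∀ j, ρ j 0 = 0) (hρ1 : ∃ j, ρ j 1 = 1)
    (ε : ℝ) (hε : 0 < ε) (Xhat : Set X)
    (hnet : ∀ x : X, ∃ y ∈ Xhat, dist x y ≤ ε)
    (hproper : ∀ D : Set X, Bornology.IsBounded D → (D ∩ Xhat).Finite)
    (r : X → X) (hr_mem : ∀ x, r x ∈ Xhat) (hr_id : ∀ x ∈ Xhat, r x = x)
    (hr_dist : ∀ x, dist x (r x) ≤ ε)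
    (u : X → ℝ)
    (hu01 : ∀ x, u x ∈ Set.Icc (0 : ℝ) 1) (hun : ∃ x, u x = 1)
    (hufin : {x | 0 < u x}.Finite) (husub : {x | 0 < u x} ⊆ Xhat)
    (ZS : (X → ℝ) → X → ℝ)
    (hZS : ∀ v : X → ℝ, ∀ x, ZS v x = ⨆ j, ρ j (sSup (v '' {y | φ j y = x})))
    (Zhat : X → ℝ)
    (hZhat : ∀ x, Zhat x =
      if x ∈ Xhat then ⨆ j, ρ j (sSup (u '' {y | y ∈ Xhat ∧ r (φ j y) = x})) else 0) :
    Zhat = fun x => sSup (ZS u '' {y | r y = x}) :=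
  stmt16_general φ ρ hρ_mono hρ0 Xhat r hr_mem u hu01 hufin husub ZS hZS Zhat hZhat
end

section
/- Discrete fuzzy Hutchinson–Barnsley theorem: let S be an IFZS of Banach contractions on a complete metric space with fuzzy attractor u_S and α := max Lip(φⱼ) < 1, X̂ a proper ε-net, r an ε-projection, Ŝ the discretized IFZS. Then for any u ∈ F*_{X̂} and n ∈ ℕ, d_∞(e(Z_Ŝⁿ(u)), u_S) ≤ 5ε/(1−α) + αⁿ·d_∞(e(u), u_S). -/
/-!
Each level set of the discretized image `Z_Ŝ v` lies within `ε + α d_∞(v, u_S)` of the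
corresponding level set of the attractor `u_S = Z_S u_S`, and conversely: a point at level `t` of
either operator is, up to the projection `r` (which moves points by at most `ε`), an image `φⱼ y`
of a point `y` whose level `s` satisfies `t ≤ ρⱼ s`, and `φⱼ` maps the level-`s` set of the other
fuzzy set into its level-`t` set while contracting distances by `α`. Iterating
`dₙ₊₁ ≤ ε + α dₙ` gives `dₙ ≤ ε / (1 - α) + αⁿ d₀`.
-/

open Metric Set

section Suprema

variable {X : Type*} {v : X → ℝ}

lemma sSup_image_mem_Icc_zero_one (hv : ∀ x, v x ∈ Icc (0 : ℝ) 1) (S : Set X) :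
    sSup (v '' S) ∈ Icc (0 : ℝ) 1 :=
  ⟨Real.sSup_nonneg (by rintro _ ⟨x, -, rfl⟩; exact (hv x).1),
    Real.sSup_le (by rintro _ ⟨x, -, rfl⟩; exact (hv x).2) zero_le_one⟩

lemma exists_lt_apply_of_lt_sSup_image {S : Set X} {a : ℝ} (ha : 0 ≤ a)
    (hlt : a < sSup (v '' S)) : ∃ y ∈ S, a < v y := by
  have hne : (v '' S).Nonempty := by
    by_contra h
    rw [not_nonempty_iff_eq_empty.mp h, Real.sSup_empty] at hlt
    exact hlt.not_ge ha
  obtain ⟨_, ⟨y, hyS, rfl⟩, hy⟩ := exists_lt_of_lt_csSup hne hlt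
  exact ⟨y, hyS, hy⟩

lemma exists_eq_sSup_image_of_finite_pos (hfin : {x | 0 < v x}.Finite) {S : Set X}
    (hpos : 0 < sSup (v '' S)) : ∃ y ∈ S, v y = sSup (v '' S) := by
  obtain ⟨y₀, hy₀S, hy₀⟩ := exists_lt_apply_of_lt_sSup_image le_rfl hpos
  obtain ⟨y, ⟨hyS, hy⟩, hymax⟩ :=
    exists_max_image _ v (hfin.subset inter_subset_right) ⟨y₀, hy₀S, hy₀⟩
  have hgreatest : IsGreatest (v '' S) (v y) := by
    refine ⟨⟨y, hyS, rfl⟩, ?_⟩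
    rintro _ ⟨x, hxS, rfl⟩
    by_cases hx : 0 < v x
    · exact hymax x ⟨hxS, hx⟩
    · exact (not_lt.mp hx).trans hy.le
  exact ⟨y, hyS, hgreatest.csSup_eq.symm⟩

lemma UpperSemicontinuous.exists_eq_sSup_image_of_pos [TopologicalSpace X]
    (hv : UpperSemicontinuous v) (hsupp : IsCompact (closure {x | 0 < v x})) {P : Set X}
    (hP : IsClosed P) (hpos : 0 < sSup (v '' P)) : ∃ y ∈ P, v y = sSup (v '' P) := by
  obtain ⟨a, ha0, ha⟩ := exists_between hpos
  obtain ⟨y₀, hy₀P, hy₀⟩ := exists_lt_apply_of_lt_sSup_image ha0.le ha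
  set K := P ∩ {x | a ≤ v x}
  have hK : IsCompact K := hsupp.of_isClosed_subset (hP.inter (hv.isClosed_preimage a))
    fun x hx => subset_closure (ha0.trans_le hx.2)
  obtain ⟨y, ⟨hyP, hya⟩, hymax⟩ :=
    UpperSemicontinuousOn.exists_isMaxOn (s := K) ⟨y₀, hy₀P, hy₀.le⟩ hK
      (hv.upperSemicontinuousOn K)
  have hgreatest : IsGreatest (v '' P) (v y) := by
    refine ⟨⟨y, hyP, rfl⟩, ?_⟩
    rintro _ ⟨x, hxP, rfl⟩
    by_cases hx : a ≤ v x
    · exact hymax ⟨hxP, hx⟩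
    · exact (not_le.mp hx).le.trans hya
  exact ⟨y, hyP, hgreatest.csSup_eq.symm⟩

variable {J : Type*} {ρ : J → ℝ → ℝ} {F : J → Set X}

lemma le_iSup_sSup_image [Finite J] {j : J} {y : X} (hv : ∀ x, v x ∈ Icc (0 : ℝ) 1)
    (hρ : MonotoneOn (ρ j) (Icc 0 1)) (hy : y ∈ F j) :
    ρ j (v y) ≤ ⨆ i, ρ i (sSup (v '' F i)) :=
  calc ρ j (v y) ≤ ρ j (sSup (v '' F j)) :=
        hρ (hv y) (sSup_image_mem_Icc_zero_one hv _)
          (le_csSup ⟨1, by rintro _ ⟨x, -, rfl⟩; exact (hv x).2⟩ ⟨y, hy, rfl⟩)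
    _ ≤ ⨆ i, ρ i (sSup (v '' F i)) :=
        le_ciSup (f := fun i => ρ i (sSup (v '' F i))) (finite_range _).bddAbove j

lemma iSup_sSup_image_mem_Icc [Nonempty J] (hv : ∀ x, v x ∈ Icc (0 : ℝ) 1)
    (hρ : ∀ j, ∀ t ∈ Icc (0 : ℝ) 1, ρ j t ∈ Icc (0 : ℝ) 1) :
    ⨆ i, ρ i (sSup (v '' F i)) ∈ Icc (0 : ℝ) 1 :=
  ⟨Real.iSup_nonneg fun i => (hρ i _ (sSup_image_mem_Icc_zero_one hv _)).1,
    ciSup_le fun i => (hρ i _ (sSup_image_mem_Icc_zero_one hv _)).2⟩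

lemma exists_le_of_le_iSup_sSup_image [Finite J] [Nonempty J] {t : ℝ}
    (hv : ∀ x, v x ∈ Icc (0 : ℝ) 1) (hρ0 : ∀ j, ρ j 0 = 0)
    (hattain : ∀ j, 0 < sSup (v '' F j) → ∃ y ∈ F j, v y = sSup (v '' F j))
    (ht : 0 < t) (hle : t ≤ ⨆ i, ρ i (sSup (v '' F i))) : ∃ j, ∃ y ∈ F j, t ≤ ρ j (v y) := by
  obtain ⟨j, hjmax⟩ := Finite.exists_max fun i => ρ i (sSup (v '' F i))
  have htj : t ≤ ρ j (sSup (v '' F j)) := hle.trans (ciSup_le hjmax)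
  have hpos : 0 < sSup (v '' F j) := by
    refine (sSup_image_mem_Icc_zero_one hv _).1.lt_of_ne fun h => ?_
    rw [← h, hρ0] at htj
    exact ht.not_ge htj
  obtain ⟨y, hy, hvy⟩ := hattain j hpos
  exact ⟨j, y, hy, hvy ▸ htj⟩

end Suprema

lemma Metric.infDist_apply_le {X : Type*} [PseudoMetricSpace X] {f : X → X} {α ε : ℝ}
    (hα : 0 ≤ α) (hf : ∀ a b, dist (f a) (f b) ≤ α * dist a b) {A B : Set X} (hA : A.Nonempty)
    (hAB : ∀ a ∈ A, ∃ b ∈ B, dist (f a) b ≤ ε) (y : X) :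
    infDist (f y) B ≤ α * infDist y A + ε := by
  have : Nonempty A := hA.to_subtype
  rw [infDist_eq_iInf (s := A), Real.mul_iInf_of_nonneg hα, ← sub_le_iff_le_add]
  refine le_ciInf fun ⟨a, ha⟩ => ?_
  obtain ⟨b, hb, hab⟩ := hAB a ha
  calc infDist (f y) B - ε ≤ dist (f y) b - ε := by gcongr; exact infDist_le_dist_of_mem hb
    _ ≤ dist (f y) (f a) := by linarith [dist_triangle (f y) (f a) b]
    _ ≤ α * dist y a := hf y a

lemma le_div_one_sub_add_pow_mul {a : ℕ → ℝ} {ε α : ℝ} (hε : 0 ≤ ε) (hα0 : 0 ≤ α) (hα1 : α < 1)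
    (hstep : ∀ n, a (n + 1) ≤ ε + α * a n) (n : ℕ) :
    a n ≤ ε / (1 - α) + α ^ n * a 0 := by
  have hα1' : 1 - α ≠ 0 := (sub_pos.mpr hα1).ne'
  induction n with
  | zero =>
    rw [pow_zero, one_mul, le_add_iff_nonneg_left]
    exact div_nonneg hε (sub_pos.mpr hα1).le
  | succ n ih =>
    calc a (n + 1) ≤ ε + α * (ε / (1 - α) + α ^ n * a 0) := (hstep n).trans (by gcongr)
      _ = ε / (1 - α) + α ^ (n + 1) * a 0 := by field_simp; ring

section FuzzyDist

variable {X : Type*} [PseudoMetricSpace X]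

noncomputable def fuzzyDist (u v : X → ℝ) : ℝ :=
  ⨆ t ∈ Ioc (0 : ℝ) 1, hausdorffDist {x | t ≤ u x} {x | t ≤ v x}

lemma fuzzyDist_comm (u v : X → ℝ) : fuzzyDist u v = fuzzyDist v u := by
  simp only [fuzzyDist, hausdorffDist_comm]

lemma fuzzyDist_nonneg (u v : X → ℝ) : 0 ≤ fuzzyDist u v :=
  Real.iSup_nonneg fun _ => Real.iSup_nonneg fun _ => hausdorffDist_nonneg

lemma fuzzyDist_le {u v : X → ℝ} {D : ℝ} (hD : 0 ≤ D)
    (h : ∀ t, 0 < t → t ≤ 1 → hausdorffDist {x | t ≤ u x} {x | t ≤ v x} ≤ D) :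
    fuzzyDist u v ≤ D :=
  Real.iSup_le (fun t => Real.iSup_le (fun ht => h t ht.1 ht.2) hD) hD

lemma hausdorffDist_le_fuzzyDist {u v : X → ℝ} (hu : Bornology.IsBounded {x | 0 < u x})
    (hv : Bornology.IsBounded {x | 0 < v x}) {t : ℝ} (ht : 0 < t) (ht1 : t ≤ 1) :
    hausdorffDist {x | t ≤ u x} {x | t ≤ v x} ≤ fuzzyDist u v := by
  set B := diam ({x | 0 < u x} ∪ {x | 0 < v x})
  have hbound : ∀ s : ℝ, 0 < s → hausdorffDist {x | s ≤ u x} {x | s ≤ v x} ≤ B := by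
    intro s hs
    have hsub : ∀ w : X → ℝ, {x | s ≤ w x} ⊆ {x | 0 < w x} := fun _ _ hx => hs.trans_le hx
    rcases eq_empty_or_nonempty {x | s ≤ u x} with hue | hune
    · rw [hue, hausdorffDist_empty']; exact diam_nonneg
    rcases eq_empty_or_nonempty {x | s ≤ v x} with hve | hvne
    · rw [hve, hausdorffDist_empty]; exact diam_nonneg
    exact (hausdorffDist_le_diam hune (hu.subset (hsub u)) hvne (hv.subset (hsub v))).trans
      (diam_mono (union_subset_union (hsub u) (hsub v)) (hu.union hv))
  have hbdd : BddAbove (range fun s => ⨆ _ : s ∈ Ioc (0 : ℝ) 1,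
      hausdorffDist {x | s ≤ u x} {x | s ≤ v x}) :=
    ⟨B, forall_mem_range.mpr fun s => Real.iSup_le (fun hs => hbound s hs.1) diam_nonneg⟩
  calc hausdorffDist {x | t ≤ u x} {x | t ≤ v x}
      = ⨆ _ : t ∈ Ioc (0 : ℝ) 1, hausdorffDist {x | t ≤ u x} {x | t ≤ v x} :=
        (ciSup_pos (f := fun _ => hausdorffDist {x | t ≤ u x} {x | t ≤ v x})
          (⟨ht, ht1⟩ : t ∈ Ioc (0 : ℝ) 1)).symm
    _ ≤ fuzzyDist u v := le_ciSup hbdd t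

lemma infDist_le_fuzzyDist {u v : X → ℝ} (hu : Bornology.IsBounded {x | 0 < u x})
    (hv : Bornology.IsBounded {x | 0 < v x}) (hv1 : ∃ x, v x = 1) {y : X} (hy : 0 < u y)
    (hy1 : u y ≤ 1) : infDist y {x | u y ≤ v x} ≤ fuzzyDist u v := by
  obtain ⟨x₁, hx₁⟩ := hv1
  have hx₁y : x₁ ∈ {x | u y ≤ v x} := show u y ≤ v x₁ from hx₁ ▸ hy1
  have hsub : ∀ w : X → ℝ, {x | u y ≤ w x} ⊆ {x | 0 < w x} := fun _ _ hx => hy.trans_le hx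
  calc infDist y {x | u y ≤ v x} ≤ hausdorffDist {x | u y ≤ u x} {x | u y ≤ v x} :=
        infDist_le_hausdorffDist_of_mem (show u y ≤ u y from le_rfl) <|
          hausdorffEDist_ne_top_of_nonempty_of_bounded ⟨y, show u y ≤ u y from le_rfl⟩
            ⟨x₁, hx₁y⟩ (hu.subset (hsub u)) (hv.subset (hsub v))
    _ ≤ fuzzyDist u v := hausdorffDist_le_fuzzyDist hu hv hy hy1

end FuzzyDist

section FuzzyIFS

variable {X J : Type*} {φ : J → X → X} {ρ : J → ℝ → ℝ} {uS : X → ℝ}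

lemma pos_of_le_apply {g : ℝ → ℝ} (hg0 : g 0 = 0) {s t : ℝ} (hs : 0 ≤ s) (ht : 0 < t)
    (hle : t ≤ g s) : 0 < s := by
  refine hs.lt_of_ne fun h => ?_
  rw [← h, hg0] at hle
  exact ht.not_ge hle

lemma rho_le_attractor_apply [Finite J] (huS01 : ∀ x, uS x ∈ Icc (0 : ℝ) 1)
    (hρ_mono : ∀ j, MonotoneOn (ρ j) (Icc (0 : ℝ) 1))
    (hfix : ∀ x, uS x = ⨆ j, ρ j (sSup (uS '' {y | φ j y = x}))) (j : J) (y : X) :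
    ρ j (uS y) ≤ uS (φ j y) := by
  rw [hfix (φ j y)]
  exact le_iSup_sSup_image (F := fun i => {y' | φ i y' = φ j y}) huS01 (hρ_mono j) rfl

lemma exists_le_rho_of_le_attractor [Finite J] [Nonempty J] [TopologicalSpace X] [T1Space X]
    (hφ : ∀ j, Continuous (φ j)) (huS01 : ∀ x, uS x ∈ Icc (0 : ℝ) 1)
    (huSc : UpperSemicontinuous uS) (huSs : IsCompact (closure {x | 0 < uS x}))
    (hρ0 : ∀ j, ρ j 0 = 0) (hfix : ∀ x, uS x = ⨆ j, ρ j (sSup (uS '' {y | φ j y = x})))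
    {t : ℝ} {z : X} (ht : 0 < t) (hz : t ≤ uS z) : ∃ j, ∃ y, φ j y = z ∧ t ≤ ρ j (uS y) :=
  exists_le_of_le_iSup_sSup_image huS01 hρ0
    (fun j hpos => huSc.exists_eq_sSup_image_of_pos huSs (isClosed_singleton.preimage (hφ j)) hpos)
    ht (hfix z ▸ hz)

open scoped Classical in
/-- `Z_Ŝ` followed by the extension by zero from `Xhat` to `X`. -/
noncomputable def discreteHutchinson (Xhat : Set X) (r : X → X) (φ : J → X → X)
    (ρ : J → ℝ → ℝ) (v : X → ℝ) (x : X) : ℝ :=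
  if x ∈ Xhat then ⨆ j, ρ j (sSup (v '' {y | y ∈ Xhat ∧ r (φ j y) = x})) else 0

variable {Xhat : Set X} {r : X → X} {v : X → ℝ}

lemma rho_le_discreteHutchinson [Finite J] (hr_mem : ∀ x, r x ∈ Xhat)
    (hv : ∀ x, v x ∈ Icc (0 : ℝ) 1) (hρ_mono : ∀ j, MonotoneOn (ρ j) (Icc (0 : ℝ) 1))
    {j : J} {y : X} (hy : y ∈ Xhat) :
    ρ j (v y) ≤ discreteHutchinson Xhat r φ ρ v (r (φ j y)) := by
  rw [discreteHutchinson, if_pos (hr_mem _)]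
  exact le_iSup_sSup_image (F := fun i => {y' | y' ∈ Xhat ∧ r (φ i y') = r (φ j y)})
    hv (hρ_mono j) ⟨hy, rfl⟩

lemma exists_le_rho_of_le_discreteHutchinson [Finite J] [Nonempty J]
    (hv : ∀ x, v x ∈ Icc (0 : ℝ) 1) (hvfin : {x | 0 < v x}.Finite) (hρ0 : ∀ j, ρ j 0 = 0)
    {t : ℝ} {x : X} (ht : 0 < t) (hx : t ≤ discreteHutchinson Xhat r φ ρ v x) :
    ∃ j, ∃ y, (y ∈ Xhat ∧ r (φ j y) = x) ∧ t ≤ ρ j (v y) := by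
  rw [discreteHutchinson] at hx
  split_ifs at hx
  · exact exists_le_of_le_iSup_sSup_image hv hρ0
      (fun _ hpos => exists_eq_sSup_image_of_finite_pos hvfin hpos) ht hx
  · exact absurd hx ht.not_ge

/-- Membership in `F*_{X̂}`: on a proper net, compactly supported means finitely supported. -/
structure IsFiniteNormalFuzzySet (Y : Set X) (v : X → ℝ) : Prop where
  mem_Icc : ∀ x, v x ∈ Icc (0 : ℝ) 1
  exists_eq_one : ∃ x, v x = 1
  finite_support : {x | 0 < v x}.Finite
  support_subset : {x | 0 < v x} ⊆ Y

lemma isFiniteNormalFuzzySet_discreteHutchinson [Finite J] [Nonempty J]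
    (hρ_mono : ∀ j, MonotoneOn (ρ j) (Icc (0 : ℝ) 1))
    (hρ_maps : ∀ j, ∀ t ∈ Icc (0 : ℝ) 1, ρ j t ∈ Icc (0 : ℝ) 1)
    (hρ0 : ∀ j, ρ j 0 = 0) (hρ1 : ∃ j, ρ j 1 = 1) (hr_mem : ∀ x, r x ∈ Xhat)
    (hv : IsFiniteNormalFuzzySet Xhat v) :
    IsFiniteNormalFuzzySet Xhat (discreteHutchinson Xhat r φ ρ v) := by
  have hmem : ∀ x, discreteHutchinson Xhat r φ ρ v x ∈ Icc (0 : ℝ) 1 := by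
    intro x
    rw [discreteHutchinson]
    split_ifs
    · exact iSup_sSup_image_mem_Icc hv.mem_Icc hρ_maps
    · exact ⟨le_rfl, zero_le_one⟩
  refine ⟨hmem, ?_, ?_, ?_⟩
  · obtain ⟨x₀, hx₀⟩ := hv.exists_eq_one
    obtain ⟨j, hj⟩ := hρ1
    have hx₀X : x₀ ∈ Xhat := hv.support_subset (show 0 < v x₀ by rw [hx₀]; exact one_pos)
    refine ⟨r (φ j x₀), le_antisymm (hmem _).2 ?_⟩
    simpa [hx₀, hj] using rho_le_discreteHutchinson hr_mem hv.mem_Icc hρ_mono (j := j) hx₀X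
  · refine (finite_iUnion fun j => hv.finite_support.image fun y => r (φ j y)).subset ?_
    intro x hx
    obtain ⟨j, y, ⟨-, rfl⟩, hle⟩ :=
      exists_le_rho_of_le_discreteHutchinson hv.mem_Icc hv.finite_support hρ0 hx le_rfl
    exact mem_iUnion.mpr ⟨j, y, pos_of_le_apply (hρ0 j) (hv.mem_Icc y).1 hx hle, rfl⟩
  · intro x hx
    by_contra hxX
    exact (show 0 < discreteHutchinson Xhat r φ ρ v x from hx).ne' (if_neg hxX)

section Step

variable [MetricSpace X] [Finite J] [Nonempty J] {α ε : ℝ}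

lemma infDist_setOf_le_attractor_le (hα0 : 0 ≤ α)
    (hφ : ∀ j, ∀ x y, dist (φ j x) (φ j y) ≤ α * dist x y)
    (hρ_mono : ∀ j, MonotoneOn (ρ j) (Icc (0 : ℝ) 1)) (hρ0 : ∀ j, ρ j 0 = 0)
    (huS01 : ∀ x, uS x ∈ Icc (0 : ℝ) 1) (huSn : ∃ x, uS x = 1)
    (huSs : IsCompact (closure {x | 0 < uS x}))
    (hfix : ∀ x, uS x = ⨆ j, ρ j (sSup (uS '' {y | φ j y = x})))
    (hr_dist : ∀ x, dist x (r x) ≤ ε) (hv : IsFiniteNormalFuzzySet Xhat v)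
    {t : ℝ} {x : X} (ht : 0 < t) (hx : t ≤ discreteHutchinson Xhat r φ ρ v x) :
    infDist x {z | t ≤ uS z} ≤ ε + α * fuzzyDist v uS := by
  obtain ⟨j, y, ⟨-, rfl⟩, hty⟩ :=
    exists_le_rho_of_le_discreteHutchinson hv.mem_Icc hv.finite_support hρ0 ht hx
  have hy : 0 < v y := pos_of_le_apply (hρ0 j) (hv.mem_Icc y).1 ht hty
  obtain ⟨x₁, hx₁⟩ := huSn
  have hA : {z | v y ≤ uS z}.Nonempty := ⟨x₁, show v y ≤ uS x₁ from hx₁ ▸ (hv.mem_Icc y).2⟩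
  have hmaps : ∀ a ∈ {z | v y ≤ uS z}, ∃ b ∈ {z | t ≤ uS z}, dist (φ j a) b ≤ 0 :=
    fun a ha => ⟨φ j a, hty.trans ((hρ_mono j (hv.mem_Icc y) (huS01 a) ha).trans
      (rho_le_attractor_apply huS01 hρ_mono hfix j a)), (dist_self _).le⟩
  have hyA : infDist y {z | v y ≤ uS z} ≤ fuzzyDist v uS :=
    infDist_le_fuzzyDist hv.finite_support.isBounded (huSs.isBounded.subset subset_closure)
      ⟨x₁, hx₁⟩ hy (hv.mem_Icc y).2
  calc infDist (r (φ j y)) {z | t ≤ uS z}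
      ≤ infDist (φ j y) {z | t ≤ uS z} + dist (r (φ j y)) (φ j y) :=
        infDist_le_infDist_add_dist
    _ ≤ (α * infDist y {z | v y ≤ uS z} + 0) + ε := by
        gcongr
        · exact infDist_apply_le hα0 (hφ j) hA hmaps y
        · exact dist_comm (φ j y) _ ▸ hr_dist _
    _ ≤ ε + α * fuzzyDist v uS := by linarith [mul_le_mul_of_nonneg_left hyA hα0]

lemma infDist_setOf_le_discreteHutchinson_le (hα0 : 0 ≤ α)
    (hφ : ∀ j, ∀ x y, dist (φ j x) (φ j y) ≤ α * dist x y)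
    (hρ_mono : ∀ j, MonotoneOn (ρ j) (Icc (0 : ℝ) 1)) (hρ0 : ∀ j, ρ j 0 = 0)
    (huS01 : ∀ x, uS x ∈ Icc (0 : ℝ) 1) (huSc : UpperSemicontinuous uS)
    (huSs : IsCompact (closure {x | 0 < uS x}))
    (hfix : ∀ x, uS x = ⨆ j, ρ j (sSup (uS '' {y | φ j y = x})))
    (hr_mem : ∀ x, r x ∈ Xhat) (hr_dist : ∀ x, dist x (r x) ≤ ε)
    (hv : IsFiniteNormalFuzzySet Xhat v) {t : ℝ} {z : X} (ht : 0 < t) (hz : t ≤ uS z) :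
    infDist z {x | t ≤ discreteHutchinson Xhat r φ ρ v x} ≤ ε + α * fuzzyDist v uS := by
  obtain ⟨j, y, rfl, hty⟩ := exists_le_rho_of_le_attractor
    (fun j => (LipschitzWith.of_dist_le' (hφ j)).continuous) huS01 huSc huSs hρ0 hfix ht hz
  have hy : 0 < uS y := pos_of_le_apply (hρ0 j) (huS01 y).1 ht hty
  obtain ⟨x₁, hx₁⟩ := hv.exists_eq_one
  have hA : {x | uS y ≤ v x}.Nonempty := ⟨x₁, show uS y ≤ v x₁ from hx₁ ▸ (huS01 y).2⟩
  have hmaps : ∀ a ∈ {x | uS y ≤ v x},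
      ∃ b ∈ {x | t ≤ discreteHutchinson Xhat r φ ρ v x}, dist (φ j a) b ≤ ε :=
    fun a ha => ⟨r (φ j a), hty.trans ((hρ_mono j (huS01 y) (hv.mem_Icc a) ha).trans
      (rho_le_discreteHutchinson hr_mem hv.mem_Icc hρ_mono
        (hv.support_subset (hy.trans_le ha)))), hr_dist _⟩
  have hyA : infDist y {x | uS y ≤ v x} ≤ fuzzyDist v uS :=
    fuzzyDist_comm uS v ▸ infDist_le_fuzzyDist (huSs.isBounded.subset subset_closure)
      hv.finite_support.isBounded ⟨x₁, hx₁⟩ hy (huS01 y).2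
  calc infDist (φ j y) {x | t ≤ discreteHutchinson Xhat r φ ρ v x}
      ≤ α * infDist y {x | uS y ≤ v x} + ε := infDist_apply_le hα0 (hφ j) hA hmaps y
    _ ≤ ε + α * fuzzyDist v uS := by linarith [mul_le_mul_of_nonneg_left hyA hα0]

lemma fuzzyDist_discreteHutchinson_le (hε : 0 ≤ ε) (hα0 : 0 ≤ α)
    (hφ : ∀ j, ∀ x y, dist (φ j x) (φ j y) ≤ α * dist x y)
    (hρ_mono : ∀ j, MonotoneOn (ρ j) (Icc (0 : ℝ) 1)) (hρ0 : ∀ j, ρ j 0 = 0)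
    (huS01 : ∀ x, uS x ∈ Icc (0 : ℝ) 1) (huSn : ∃ x, uS x = 1)
    (huSc : UpperSemicontinuous uS) (huSs : IsCompact (closure {x | 0 < uS x}))
    (hfix : ∀ x, uS x = ⨆ j, ρ j (sSup (uS '' {y | φ j y = x})))
    (hr_mem : ∀ x, r x ∈ Xhat) (hr_dist : ∀ x, dist x (r x) ≤ ε)
    (hv : IsFiniteNormalFuzzySet Xhat v) :
    fuzzyDist (discreteHutchinson Xhat r φ ρ v) uS ≤ ε + α * fuzzyDist v uS := by
  have hD : 0 ≤ ε + α * fuzzyDist v uS := add_nonneg hε (mul_nonneg hα0 (fuzzyDist_nonneg _ _))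
  refine fuzzyDist_le hD fun t ht _ => hausdorffDist_le_of_infDist hD ?_ ?_
  · exact fun x hx => infDist_setOf_le_attractor_le hα0 hφ hρ_mono hρ0 huS01 huSn huSs hfix
      hr_dist hv ht hx
  · exact fun z hz => infDist_setOf_le_discreteHutchinson_le hα0 hφ hρ_mono hρ0 huS01 huSc huSs
      hfix hr_mem hr_dist hv ht hz

end Step

end FuzzyIFS

open scoped Classical in
theorem stmt17_general {X : Type*} [MetricSpace X] {J : Type*} [Fintype J] [Nonempty J]
    (φ : J → X → X) (α : ℝ) (hα0 : 0 ≤ α) (hα1 : α < 1)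
    (hφ : ∀ j, ∀ x y, dist (φ j x) (φ j y) ≤ α * dist x y)
    (ρ : J → ℝ → ℝ)
    (hρ_mono : ∀ j, MonotoneOn (ρ j) (Set.Icc (0 : ℝ) 1))
    (hρ_maps : ∀ j, ∀ t ∈ Set.Icc (0 : ℝ) 1, ρ j t ∈ Set.Icc (0 : ℝ) 1)
    (hρ0 : ∀ j, ρ j 0 = 0) (hρ1 : ∃ j, ρ j 1 = 1)
    (uS : X → ℝ)
    (huS01 : ∀ x, uS x ∈ Set.Icc (0 : ℝ) 1) (huSn : ∃ x, uS x = 1)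
    (huSc : UpperSemicontinuous uS) (huSs : IsCompact (closure {x | 0 < uS x}))
    (hfix : ∀ x, uS x = ⨆ j, ρ j (sSup (uS '' {y | φ j y = x})))
    (ε : ℝ) (hε : 0 < ε) (Xhat : Set X)
    (r : X → X) (hr_mem : ∀ x, r x ∈ Xhat)
    (hr_dist : ∀ x, dist x (r x) ≤ ε)
    (ZH : (X → ℝ) → X → ℝ)
    (hZH : ∀ v : X → ℝ, ∀ x, ZH v x =
      if x ∈ Xhat then ⨆ j, ρ j (sSup (v '' {y | y ∈ Xhat ∧ r (φ j y) = x})) else 0)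
    (u : X → ℝ)
    (hu01 : ∀ x, u x ∈ Set.Icc (0 : ℝ) 1) (hun : ∃ x, u x = 1)
    (hufin : {x | 0 < u x}.Finite) (husub : {x | 0 < u x} ⊆ Xhat) :
    ∀ n : ℕ,
      (⨆ t ∈ Set.Ioc (0 : ℝ) 1,
          Metric.hausdorffDist {x | t ≤ (ZH^[n] u) x} {x | t ≤ uS x})
        ≤ 5 * ε / (1 - α) + α ^ n *
            ⨆ t ∈ Set.Ioc (0 : ℝ) 1,
              Metric.hausdorffDist {x | t ≤ u x} {x | t ≤ uS x} := by
  intro n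
  obtain rfl : ZH = discreteHutchinson Xhat r φ ρ := funext fun v => funext (hZH v)
  set Z := discreteHutchinson Xhat r φ ρ
  have hiter : ∀ n, IsFiniteNormalFuzzySet Xhat (Z^[n] u) :=
    Function.Iterate.rec _ ⟨hu01, hun, hufin, husub⟩ fun _ hv =>
      isFiniteNormalFuzzySet_discreteHutchinson hρ_mono hρ_maps hρ0 hρ1 hr_mem hv
  have hstep : ∀ n, fuzzyDist (Z^[n + 1] u) uS ≤ ε + α * fuzzyDist (Z^[n] u) uS := fun n => by
    rw [Function.iterate_succ_apply']
    exact fuzzyDist_discreteHutchinson_le hε.le hα0 hφ hρ_mono hρ0 huS01 huSn huSc huSs hfix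
      hr_mem hr_dist (hiter n)
  calc fuzzyDist (Z^[n] u) uS ≤ ε / (1 - α) + α ^ n * fuzzyDist u uS :=
        le_div_one_sub_add_pow_mul (a := fun n => fuzzyDist (Z^[n] u) uS) hε.le hα0 hα1 hstep n
    _ ≤ 5 * ε / (1 - α) + α ^ n * fuzzyDist u uS := by
        gcongr
        linarith

open scoped Classical in
theorem stmt17 {X : Type*} [MetricSpace X] [CompleteSpace X] {J : Type*} [Fintype J] [Nonempty J]
    (φ : J → X → X) (α : ℝ) (hα0 : 0 ≤ α) (hα1 : α < 1)
    (hφ : ∀ j, ∀ x y, dist (φ j x) (φ j y) ≤ α * dist x y)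
    (ρ : J → ℝ → ℝ)
    (hρ_mono : ∀ j, MonotoneOn (ρ j) (Set.Icc (0 : ℝ) 1))
    (hρ_maps : ∀ j, ∀ t ∈ Set.Icc (0 : ℝ) 1, ρ j t ∈ Set.Icc (0 : ℝ) 1)
    (hρ_rc : ∀ j, ∀ a ∈ Set.Icc (0 : ℝ) 1, ContinuousWithinAt (ρ j) (Set.Ici a) a)
    (hρ0 : ∀ j, ρ j 0 = 0) (hρ1 : ∃ j, ρ j 1 = 1)
    (uS : X → ℝ)
    (huS01 : ∀ x, uS x ∈ Set.Icc (0 : ℝ) 1) (huSn : ∃ x, uS x = 1)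
    (huSc : UpperSemicontinuous uS) (huSs : IsCompact (closure {x | 0 < uS x}))
    (hfix : ∀ x, uS x = ⨆ j, ρ j (sSup (uS '' {y | φ j y = x})))
    (ε : ℝ) (hε : 0 < ε) (Xhat : Set X)
    (hnet : ∀ x : X, ∃ y ∈ Xhat, dist x y ≤ ε)
    (hproper : ∀ D : Set X, Bornology.IsBounded D → (D ∩ Xhat).Finite)
    (r : X → X) (hr_mem : ∀ x, r x ∈ Xhat) (hr_id : ∀ x ∈ Xhat, r x = x)
    (hr_dist : ∀ x, dist x (r x) ≤ ε)
    (ZH : (X → ℝ) → X → ℝ)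
    (hZH : ∀ v : X → ℝ, ∀ x, ZH v x =
      if x ∈ Xhat then ⨆ j, ρ j (sSup (v '' {y | y ∈ Xhat ∧ r (φ j y) = x})) else 0)
    (u : X → ℝ)
    (hu01 : ∀ x, u x ∈ Set.Icc (0 : ℝ) 1) (hun : ∃ x, u x = 1)
    (hufin : {x | 0 < u x}.Finite) (husub : {x | 0 < u x} ⊆ Xhat) :
    ∀ n : ℕ,
      (⨆ t ∈ Set.Ioc (0 : ℝ) 1,
          Metric.hausdorffDist {x | t ≤ (ZH^[n] u) x} {x | t ≤ uS x})
        ≤ 5 * ε / (1 - α) + α ^ n *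
            ⨆ t ∈ Set.Ioc (0 : ℝ) 1,
              Metric.hausdorffDist {x | t ≤ u x} {x | t ≤ uS x} :=
  stmt17_general φ α hα0 hα1 hφ ρ hρ_mono hρ_maps hρ0 hρ1 uS huS01 huSn huSc huSs hfix ε hε Xhat r
    hr_mem hr_dist ZH hZH u hu01 hun hufin husub
end

section
/- Let (X,d) be a complete metric space, m ∈ ℕ, and f: Xᵐ → X Lipschitz with constant α < 1 with respect to the maximum metric on Xᵐ. Then there is a unique x* ∈ X with f(x*,...,x*) = x*, and for any initial points x₀,...,x_{m−1}, the sequence defined by x_{k+m} = f(x_k,...,x_{k+m−1}) converges to x*. -/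
theorem stmt18 {X : Type*} [MetricSpace X] [CompleteSpace X] [Nonempty X]
    (m : ℕ) (hm : 0 < m) (f : (Fin m → X) → X) (α : ℝ) (hα0 : 0 ≤ α) (hα1 : α < 1)
    (hf : ∀ x y : Fin m → X, dist (f x) (f y) ≤ α * dist x y) :
    ∃ z : X, f (fun _ => z) = z ∧ (∀ w : X, f (fun _ => w) = w → w = z) ∧
      ∀ x : ℕ → X, (∀ k, x (k + m) = f (fun i => x (k + i))) →
        Filter.Tendsto x Filter.atTop (nhds z) := by
  haveI : Nonempty (Fin m) := ⟨⟨0, hm⟩⟩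
  set g : X → X := fun z => f (fun _ => z) with hg
  have hgc : ∀ a b : X, dist (g a) (g b) ≤ α * dist a b := by
    intro a b
    calc dist (g a) (g b) ≤ α * dist (fun _ : Fin m => a) (fun _ : Fin m => b) := hf _ _
    _ = α * dist a b := by rw [dist_pi_const]
  have hcontr : ContractingWith ⟨α, hα0⟩ g := by
    refine ⟨by exact_mod_cast hα1, LipschitzWith.of_dist_le_mul fun a b => hgc a b⟩
  set z := hcontr.fixedPoint g with hzdef
  have hzfix : g z = z := hcontr.fixedPoint_isFixedPt
  refine ⟨z, hzfix, ?_, ?_⟩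
  · intro w hw
    exact hcontr.fixedPoint_unique hw
  · intro x hx
    obtain ⟨B, hB0, hB⟩ : ∃ B : ℝ, 0 ≤ B ∧ ∀ i < m, dist (x i) z ≤ B := by
      refine ⟨Finset.univ.sup' Finset.univ_nonempty (fun i : Fin m => dist (x i) z), ?_, ?_⟩
      · exact le_trans dist_nonneg
          (Finset.le_sup' (fun i : Fin m => dist (x i) z) (Finset.mem_univ (⟨0, hm⟩ : Fin m)))
      · intro i hi
        exact Finset.le_sup' (fun i : Fin m => dist (x i) z) (Finset.mem_univ ⟨i, hi⟩)
    have step : ∀ k r, (∀ i < m, dist (x (k + i)) z ≤ r) → 0 ≤ r →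
        dist (x (k + m)) z ≤ α * r := by
      intro k r hr hr0
      rw [hx k]
      calc dist (f fun i => x (k + i)) z = dist (f fun i => x (k + i)) (g z) := by rw [hzfix]
      _ ≤ α * r := by
        refine le_trans (hf _ _) (mul_le_mul_of_nonneg_left ?_ hα0)
        exact dist_pi_le_iff hr0 |>.2 fun i => hr i i.2
    have base : ∀ k, dist (x k) z ≤ B := by
      intro k
      induction k using Nat.strong_induction_on with
      | _ k ih =>
        rcases lt_or_ge k m with h | h
        · exact hB k h
        · obtain ⟨k', rfl⟩ : ∃ k', k = k' + m := ⟨k - m, (Nat.sub_add_cancel h).symm⟩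
          calc dist (x (k' + m)) z ≤ α * B := step k' B (fun i hi => ih (k' + i) (by omega)) hB0
          _ ≤ 1 * B := mul_le_mul_of_nonneg_right hα1.le hB0
          _ = B := one_mul B
    have bound : ∀ n k, n * m ≤ k → dist (x k) z ≤ α ^ n * B := by
      intro n
      induction n with
      | zero => intro k _; simpa using base k
      | succ n ih =>
        intro k hk
        rw [Nat.succ_mul] at hk
        have hmk : m ≤ k := by omega
        obtain ⟨k', rfl⟩ : ∃ k', k = k' + m := ⟨k - m, by omega⟩
        have := step k' (α ^ n * B) (fun i hi => ih (k' + i) (by omega))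
          (mul_nonneg (pow_nonneg hα0 n) hB0)
        calc dist (x (k' + m)) z ≤ α * (α ^ n * B) := this
        _ = α ^ (n + 1) * B := by ring
    have hdiv : Filter.Tendsto (fun k : ℕ => k / m) Filter.atTop Filter.atTop := by
      apply Filter.tendsto_atTop_atTop.2
      intro b
      exact ⟨b * m, fun k hk => (Nat.le_div_iff_mul_le hm).2 hk⟩
    have hpow : Filter.Tendsto (fun k : ℕ => α ^ (k / m) * B) Filter.atTop (nhds 0) := by
      have := (tendsto_pow_atTop_nhds_zero_of_lt_one hα0 hα1).comp hdiv
      simpa using this.mul_const B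
    rw [tendsto_iff_dist_tendsto_zero]
    refine squeeze_zero (fun k => dist_nonneg) (fun k => ?_) hpow
    exact bound (k / m) k (Nat.div_mul_le_self k m)
end
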